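/- arXiv:1708.01977 — 4 statements merged into one kernel-verified Lean document; each statement's English description precedes it below -/
import Mathlib

section
/- Consider two independent Bernoulli random variables X1 ~ Bernoulli(μ1) and X2 ~ Bernoulli(μ2). Draw one sample from each at rounds 1 and 2, and at round 3 draw a second sample from the distribution whose first sample is larger (choosing distribution 1 in case of a tie). Let M1 be the average of all samples drawn from distribution 1 by round 3. Then E[M1] − μ1 = −(1/2)·μ1·(1−μ1)·μ2. -/
theorem bias_arm1_three_round_greedy_general (μ1 μ2 : ℝ) :
    (∑ b1 : Bool, ∑ b2 : Bool, ∑ z : Bool,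
        ((if b1 then μ1 else 1 - μ1) * (if b2 then μ2 else 1 - μ2) *
          (if z then μ1 else 1 - μ1)) *
        (if b1 = true ∨ b2 = false then
            (((if b1 then (1:ℝ) else 0) + (if z then (1:ℝ) else 0)) / 2)
          else (if b1 then (1:ℝ) else 0))) - μ1
      = -(1/2) * μ1 * (1 - μ1) * μ2 := by
  simp only [Fintype.sum_bool, ite_true, ite_false, or_true, or_false,
    Bool.false_eq_true, Bool.true_eq_false]
  ring

/-- Three-round greedy with two Bernoulli arms: the expected sample mean of arm 1
(which receives a second sample at round 3 exactly when its first sample is at least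
the first sample of arm 2, ties going to arm 1) is negatively biased, with bias
`-(1/2) * μ1 * (1 - μ1) * μ2`. -/
theorem bias_arm1_three_round_greedy (μ1 μ2 : ℝ)
    (h1 : μ1 ∈ Set.Icc (0:ℝ) 1) (h2 : μ2 ∈ Set.Icc (0:ℝ) 1) :
    (∑ b1 : Bool, ∑ b2 : Bool, ∑ z : Bool,
        ((if b1 then μ1 else 1 - μ1) * (if b2 then μ2 else 1 - μ2) *
          (if z then μ1 else 1 - μ1)) *
        (if b1 = true ∨ b2 = false then
            (((if b1 then (1:ℝ) else 0) + (if z then (1:ℝ) else 0)) / 2)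
          else (if b1 then (1:ℝ) else 0))) - μ1
      = -(1/2) * μ1 * (1 - μ1) * μ2 :=
  bias_arm1_three_round_greedy_general μ1 μ2
end

section
/- Consider two independent Bernoulli random variables X1 ~ Bernoulli(μ1) and X2 ~ Bernoulli(μ2). Draw one sample from each at rounds 1 and 2, and at round 3 draw a second sample from the distribution whose first sample is larger (choosing distribution 1 in case of a tie). Let M2 be the average of all samples drawn from distribution 2 by round 3. Then E[M2] − μ2 = −(1/2)·μ2·(1−μ2)·(1−μ1). -/
theorem bias_arm2_three_round_greedy_general (μ1 μ2 : ℝ) :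
    (∑ b1 : Bool, ∑ b2 : Bool, ∑ z : Bool,
        ((if b1 then μ1 else 1 - μ1) * (if b2 then μ2 else 1 - μ2) *
          (if z then μ2 else 1 - μ2)) *
        (if b2 = true ∧ b1 = false then
            (((if b2 then (1:ℝ) else 0) + (if z then (1:ℝ) else 0)) / 2)
          else (if b2 then (1:ℝ) else 0))) - μ2
      = -(1/2) * μ2 * (1 - μ2) * (1 - μ1) := by
  simp only [Fintype.sum_bool, Bool.true_eq_false, Bool.false_eq_true, true_and, false_and,
    ↓reduceIte]
  ring

/-- Three-round greedy with two Bernoulli arms: the expected sample mean of arm 2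
(which receives a second sample at round 3 exactly when its first sample strictly
exceeds the first sample of arm 1, ties going to arm 1) is negatively biased, with
bias `-(1/2) * μ2 * (1 - μ2) * (1 - μ1)`. -/
theorem bias_arm2_three_round_greedy (μ1 μ2 : ℝ)
    (h1 : μ1 ∈ Set.Icc (0:ℝ) 1) (h2 : μ2 ∈ Set.Icc (0:ℝ) 1) :
    (∑ b1 : Bool, ∑ b2 : Bool, ∑ z : Bool,
        ((if b1 then μ1 else 1 - μ1) * (if b2 then μ2 else 1 - μ2) *
          (if z then μ2 else 1 - μ2)) *
        (if b2 = true ∧ b1 = false then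
            (((if b2 then (1:ℝ) else 0) + (if z then (1:ℝ) else 0)) / 2)
          else (if b2 then (1:ℝ) else 0))) - μ2
      = -(1/2) * μ2 * (1 - μ2) * (1 - μ1) :=
  bias_arm2_three_round_greedy_general μ1 μ2
end

section
/- Negative bias under Exploit for a single arm against a fixed environment: Fix a deterministic mapping S that, for every finite sequence of real sample values σ = (σ_1, …, σ_T) of arm 1, outputs the number n_σ ∈ {1,…,T} of samples of arm 1 collected by horizon T, where for each i the decision of whether the i-th sample is collected by time T depends only on (σ_1,…,σ_{i−1}). Suppose S satisfies the Exploit property: for any l, if two prefixes agree in the first l−1 coordinates and one has a larger l-th coordinate, then the one with larger l-th coordinate has at least as many total collected samples, and the monotonicity condition from the proof holds (sample-pathwise the stopping structure from Exploit). If σ_1, σ_2, … are i.i.d. with finite mean μ, then E[(σ_1 + ⋯ + σ_{n_σ})/n_σ] ≤ μ. -/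
/-!
Let `Aₖ` be the mean of the first `k` values and `Uₖ = {k < n}`. Telescoping gives
`A_n = A₁ + ∑_{1 ≤ k < T} 1_{Uₖ} (A_{k+1} - Aₖ)`, where
`A_{k+1} - Aₖ = ∑_{j<k} (σₖ - σⱼ) / (k (k+1))`.
Whether `Uₖ` occurs is decided by the values before `k`, so `E[1_{Uₖ} (σₖ - μ)] = 0`; by Exploit
`Uₖ` is increasing in every `σⱼ`, so conditioning on the other values and applying the
one-dimensional Harris inequality gives `E[1_{Uₖ} (σⱼ - μ)] ≥ 0`. Every increment therefore has
nonpositive expectation and `E[A_n] ≤ E[A₁] = μ`.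

The events `Uₖ` need not be Borel; they are null-measurable for the product law because they are
upper sets in `ℝ^T`.
-/

open MeasureTheory ProbabilityTheory Set Function

lemma countable_setOf_measure_singleton_ne_zero {α : Type*} [MeasurableSpace α]
    [MeasurableSingletonClass α] (ν : Measure α) [SFinite ν] : {a | ν {a} ≠ 0}.Countable := by
  simpa [ofPred_eq_eq_singleton, pos_iff_ne_zero] using
    Measure.countable_meas_level_set_pos (μ := ν) measurable_id

lemma measure_prod_graph_of_nonatom_eq_zero {X : Type*} [MeasurableSpace X]
    (ν : Measure ℝ) [SFinite ν] (π : Measure X) [SFinite π] {g : X → EReal}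
    (hg : NullMeasurable g π) : ν.prod π {p | g p.2 = p.1 ∧ ν {p.1} = 0} = 0 := by
  have hatoms : MeasurableSet {t : ℝ | ν {t} = 0} := by
    simpa [compl_ofPred] using (countable_setOf_measure_singleton_ne_zero ν).measurableSet.compl
  obtain ⟨g', hg'm, hgg'⟩ := hg.aemeasurable
  have hgraph : MeasurableSet {p : ℝ × X | g' p.2 = p.1 ∧ ν {p.1} = 0} :=
    (measurableSet_eq_fun (hg'm.comp measurable_snd)
      (measurable_coe_real_ereal.comp measurable_fst)).inter (hatoms.preimage measurable_fst)
  have hgraph_null : ν.prod π {p : ℝ × X | g' p.2 = p.1 ∧ ν {p.1} = 0} = 0 := by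
    rw [Measure.prod_apply_symm hgraph]
    refine (lintegral_congr fun x => ?_).trans lintegral_zero
    rcases eq_empty_or_nonempty {t : ℝ | g' x = t ∧ ν {t} = 0} with h | ⟨t, ht, hνt⟩
    · simpa using congrArg ν h
    · exact measure_mono_null (fun s hs => EReal.coe_injective (hs.1.symm.trans ht)) hνt
  refine measure_mono_null (fun p hp => ?_) (measure_union_null hgraph_null
    (show ν.prod π (univ ×ˢ {x | g x ≠ g' x}) = 0 by
      rw [Measure.prod_prod, ae_iff.1 hgg', mul_zero]))
  by_cases hx : g p.2 = g' p.2
  · exact .inl ⟨hx ▸ hp.1, hp.2⟩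
  · exact .inr ⟨trivial, hx⟩

lemma nullMeasurableSet_prod_of_isUpperSet_fiber {X : Type*} [MeasurableSpace X]
    (ν : Measure ℝ) [SFinite ν] (π : Measure X) [SFinite π] {U : Set (ℝ × X)}
    (hfiber : ∀ x, IsUpperSet {t | (t, x) ∈ U})
    (hsection : ∀ t, NullMeasurableSet {x | (t, x) ∈ U} π) :
    NullMeasurableSet U (ν.prod π) := by
  classical
  set V : ℝ → Set X := fun t => {x | (t, x) ∈ U}
  -- `g x` is the left end of the ray `{t | (t, x) ∈ U}`; off the atoms of `ν`, the set `U`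
  -- differs from `{g x < t}` only on the graph of `g`, which is null
  set g : X → EReal := fun x => ⨅ q : ℚ, if x ∈ V q then ((q : ℝ) : EReal) else ⊤
  have hg : NullMeasurable g π :=
    Measurable.iInf fun q => Measurable.ite (hsection q) measurable_const measurable_const
  have mem_of_g_lt : ∀ x (t : ℝ), g x < t → (t, x) ∈ U := by
    intro x t h
    obtain ⟨q, hq⟩ := iInf_lt_iff.1 h
    split_ifs at hq with hxq
    · exact hfiber x (EReal.coe_lt_coe_iff.1 hq).le hxq
    · exact absurd hq not_top_lt
  have g_le_of_mem : ∀ x (t : ℝ), (t, x) ∈ U → g x ≤ t := by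
    intro x t h
    refine le_of_forall_gt fun c hc => ?_
    obtain ⟨q, htq, hqc⟩ := EReal.exists_rat_btwn_of_lt hc
    have hq : x ∈ V q := hfiber x (EReal.coe_lt_coe_iff.1 htq).le h
    exact (iInf_le _ q).trans_lt (by rwa [if_pos hq])
  set D : Set ℝ := {t | ν {t} ≠ 0}
  set B : Set (ℝ × X) := {p | g p.2 < p.1} ∪ ⋃ c ∈ D, {c} ×ˢ V c
  have hB : NullMeasurableSet B (ν.prod π) :=
    (measurableSet_lt hg.comp_snd
      (measurable_coe_real_ereal.comp measurable_fst).nullMeasurable).union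
      (.biUnion (countable_setOf_measure_singleton_ne_zero ν) fun c _ =>
        (measurableSet_singleton c).nullMeasurableSet.prod (hsection c))
  have hBU : B ⊆ U := by
    rintro ⟨t, x⟩ (h | h)
    · exact mem_of_g_lt x t h
    · simp only [mem_iUnion, mem_prod, mem_singleton_iff] at h
      obtain ⟨c, -, rfl, h⟩ := h
      exact h
  have hUB : U \ B ⊆ {p | g p.2 = p.1 ∧ ν {p.1} = 0} := by
    rintro ⟨t, x⟩ ⟨hU, hB⟩
    refine ⟨(g_le_of_mem x t hU).antisymm (not_lt.1 fun h => hB (.inl h)),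
      not_not.1 fun hD => hB (.inr ?_)⟩
    exact mem_biUnion hD ⟨rfl, hU⟩
  rw [← union_sdiff_cancel hBU]
  exact hB.union (.of_null (measure_mono_null hUB (measure_prod_graph_of_nonatom_eq_zero ν π hg)))

lemma IsUpperSet.nullMeasurableSet_pi {k : ℕ} (ν : Measure ℝ) [SigmaFinite ν]
    {U : Set (Fin k → ℝ)} (hU : IsUpperSet U) :
    NullMeasurableSet U (Measure.pi fun _ => ν) := by
  induction k with
  | zero => exact Subsingleton.measurableSet.nullMeasurableSet
  | succ k ih =>
    let e := MeasurableEquiv.piFinSuccAbove (fun _ : Fin (k + 1) => ℝ) 0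
    have hS : NullMeasurableSet {p : ℝ × (Fin k → ℝ) | Fin.cons p.1 p.2 ∈ U}
        (ν.prod (Measure.pi fun _ => ν)) := by
      refine nullMeasurableSet_prod_of_isUpperSet_fiber _ _ (fun y t t' htt' ht => ?_)
        (fun t => ih fun y y' hyy' hy => ?_)
      · exact hU (Fin.cons_le_cons.2 ⟨htt', le_rfl⟩) ht
      · exact hU (Fin.cons_le_cons.2 ⟨le_rfl, hyy'⟩) hy
    have hUe : U = e ⁻¹' {p | Fin.cons p.1 p.2 ∈ U} := by
      ext x
      simp [e, MeasurableEquiv.piFinSuccAbove_apply, Fin.cons_self_tail]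
    rw [hUe]
    exact hS.preimage (measurePreserving_piFinSuccAbove (fun _ => ν) 0).quasiMeasurePreserving

lemma setIntegral_eval_eq_setIntegral_prod {N : ℕ} (ν : Measure ℝ) [SigmaFinite ν]
    (i : Fin (N + 1)) (U : Set (Fin (N + 1) → ℝ)) (f : ℝ → ℝ) :
    ∫ x in U, f (x i) ∂(Measure.pi fun _ => ν) =
      ∫ p in {p : ℝ × (Fin N → ℝ) | i.insertNth p.1 p.2 ∈ U}, f p.1
        ∂ν.prod (Measure.pi fun _ => ν) := by
  let e := MeasurableEquiv.piFinSuccAbove (fun _ : Fin (N + 1) => ℝ) i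
  have hU : e ⁻¹' {p | i.insertNth p.1 p.2 ∈ U} = U := by
    ext x
    simp [e, MeasurableEquiv.piFinSuccAbove_apply]
  have := (measurePreserving_piFinSuccAbove (fun _ => ν) i).setIntegral_preimage_emb
    e.measurableEmbedding (fun p => f p.1) {p | i.insertNth p.1 p.2 ∈ U}
  rwa [hU] at this

section Harris

variable {ν : Measure ℝ} [IsProbabilityMeasure ν]

lemma integral_sub_integral_id (hν : Integrable (fun t : ℝ => t) ν) :
    ∫ t, (t - ∫ u, u ∂ν) ∂ν = 0 := by
  rw [integral_sub hν (integrable_const _), integral_const, probReal_univ, one_smul, sub_self]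

lemma IsUpperSet.setIntegral_sub_integral_id_nonneg (hν : Integrable (fun t : ℝ => t) ν)
    {s : Set ℝ} (hs : IsUpperSet s) : 0 ≤ ∫ t in s, (t - ∫ u, u ∂ν) ∂ν := by
  set m := ∫ u, u ∂ν
  have hsm : MeasurableSet s := hs.ordConnected.measurableSet
  by_cases hm : m ∈ s
  · -- then `sᶜ` lies below the mean, so it carries a nonpositive part of `∫ (t - m) = 0`
    have hcompl : ∫ t in sᶜ, (t - m) ∂ν ≤ 0 :=
      setIntegral_nonpos hsm.compl fun t ht => sub_nonpos.2 (not_le.1 fun h => ht (hs h hm)).le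
    have hsplit := integral_add_compl hsm (hν.sub (integrable_const m))
    simp only [Pi.sub_apply] at hsplit
    rw [integral_sub_integral_id hν] at hsplit
    linarith
  · exact setIntegral_nonneg hsm fun t ht => sub_nonneg.2 (not_lt.1 fun h => hm (hs h.le ht))

lemma setIntegral_fst_sub_integral_id_nonneg {X : Type*} [MeasurableSpace X] {π : Measure X}
    [IsFiniteMeasure π] (hν : Integrable (fun t : ℝ => t) ν) {S : Set (ℝ × X)}
    (hS : NullMeasurableSet S (ν.prod π)) (hfiber : ∀ x, IsUpperSet {t | (t, x) ∈ S}) :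
    0 ≤ ∫ p in S, (p.1 - ∫ u, u ∂ν) ∂ν.prod π := by
  have hint : Integrable (fun p : ℝ × X => p.1 - ∫ u, u ∂ν) (ν.prod π) :=
    (hν.comp_fst π).sub (integrable_const _)
  rw [← integral_indicator₀ hS, integral_prod_symm _ (hint.indicator₀ hS)]
  refine integral_nonneg fun x => ?_
  have := (hfiber x).setIntegral_sub_integral_id_nonneg hν
  rwa [← integral_indicator (hfiber x).ordConnected.measurableSet] at this

lemma setIntegral_univ_prod_fst_sub_integral_id_eq_zero {X : Type*} [MeasurableSpace X]
    {π : Measure X} [SFinite π] (hν : Integrable (fun t : ℝ => t) ν) (S : Set X) :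
    ∫ p in univ ×ˢ S, (p.1 - ∫ u, u ∂ν) ∂ν.prod π = 0 := by
  have := setIntegral_prod_mul (μ := ν) (ν := π) (fun t => t - ∫ u, u ∂ν) (fun _ => (1 : ℝ))
    univ S
  simpa [integral_sub_integral_id hν] using this

lemma IsUpperSet.setIntegral_eval_sub_integral_id_nonneg {N : ℕ}
    (hν : Integrable (fun t : ℝ => t) ν) {U : Set (Fin (N + 1) → ℝ)} (hU : IsUpperSet U)
    (i : Fin (N + 1)) : 0 ≤ ∫ x in U, (x i - ∫ u, u ∂ν) ∂(Measure.pi fun _ => ν) := by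
  rw [setIntegral_eval_eq_setIntegral_prod ν i U fun t => t - ∫ u, u ∂ν]
  refine setIntegral_fst_sub_integral_id_nonneg hν ?_ fun y t t' htt' ht => ?_
  · exact (hU.nullMeasurableSet_pi ν).preimage
      (measurePreserving_piFinSuccAbove (fun _ => ν) i).symm.quasiMeasurePreserving
  · exact hU (by simpa [Fin.insertNth_le_iff] using htt') ht

lemma setIntegral_eval_sub_integral_id_eq_zero {N : ℕ}
    (hν : Integrable (fun t : ℝ => t) ν) {U : Set (Fin (N + 1) → ℝ)} (i : Fin (N + 1))
    (hUi : ∀ x t, update x i t ∈ U ↔ x ∈ U) :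
    ∫ x in U, (x i - ∫ u, u ∂ν) ∂(Measure.pi fun _ => ν) = 0 := by
  rw [setIntegral_eval_eq_setIntegral_prod ν i U fun t => t - ∫ u, u ∂ν]
  have hS : {p : ℝ × (Fin N → ℝ) | i.insertNth p.1 p.2 ∈ U} =
      univ ×ˢ {y | i.insertNth 0 y ∈ U} := by
    ext ⟨t, y⟩
    simp [← hUi (i.insertNth 0 y) t, Fin.update_insertNth]
  rw [hS]
  exact setIntegral_univ_prod_fst_sub_integral_id_eq_zero hν _

end Harris

lemma dependsOn_range_of_stopping {α : Type*} {T : ℕ} {n : (ℕ → α) → ℕ}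
    (hn1 : ∀ f, 1 ≤ n f) (hnT : ∀ f, n f ≤ T)
    (hstop : ∀ f g : ℕ → α, ∀ i : ℕ, (∀ j < i, f j = g j) → (i + 1 ≤ n f ↔ i + 1 ≤ n g)) :
    DependsOn n (Finset.range T : Set ℕ) := by
  have hle : ∀ f g : ℕ → α, (∀ j < T, f j = g j) → n f ≤ n g := by
    intro f g hfg
    have := (hstop f g (n f - 1) fun j hj => hfg j (by grind)).1 (by grind)
    grind
  intro f g hfg
  simp only [Finset.coe_range, mem_Iio] at hfg
  exact (hle f g hfg).antisymm (hle g f fun j hj => (hfg j hj).symm)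

lemma DependsOn.monotone {ι α β : Type*} [DecidableEq ι] [Preorder α] [Preorder β]
    {f : (ι → α) → β} {s : Finset ι} (hf : DependsOn f s)
    (hmono : ∀ x i, Monotone fun t => f (Function.update x i t)) : Monotone f := by
  classical
  intro x y hxy
  have key : ∀ t : Finset ι, f (t.piecewise x y) ≤ f y := by
    intro t
    induction t using Finset.induction_on with
    | empty => simp
    | insert i t hi ih =>
      rw [Finset.piecewise_insert]
      calc f (Function.update (t.piecewise x y) i (x i))
          ≤ f (Function.update (t.piecewise x y) i (y i)) := hmono _ i (hxy i)
        _ = f (t.piecewise x y) := by rw [update_eq_self_iff.2 (by simp [hi])]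
        _ ≤ f y := ih
  calc f x = f (s.piecewise x y) := hf fun i hi => (Finset.piecewise_eq_of_mem _ _ _ hi).symm
    _ ≤ f y := key s

noncomputable def sampleMean (x : ℕ → ℝ) (k : ℕ) : ℝ := (∑ i ∈ Finset.range k, x i) / k

-- The telescoping sum starts from `sampleMean x 0 = 0`, a division by zero.
lemma sampleMean_eq_sum_ite (x : ℕ → ℝ) {m T : ℕ} (hm : m ≤ T) :
    sampleMean x m =
      ∑ k ∈ Finset.range T, if k < m then sampleMean x (k + 1) - sampleMean x k else 0 := by
  rw [← Finset.sum_filter, show (Finset.range T).filter (· < m) = Finset.range m by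
    ext; simp; omega, Finset.sum_range_sub]
  simp [sampleMean]

lemma sampleMean_succ_sub (x : ℕ → ℝ) {k : ℕ} (hk : k ≠ 0) :
    sampleMean x (k + 1) - sampleMean x k =
      (∑ j ∈ Finset.range k, (x k - x j)) / (k * (k + 1)) := by
  simp only [sampleMean, Finset.sum_range_succ, Finset.sum_sub_distrib, Finset.sum_const,
    Finset.card_range, nsmul_eq_mul]
  push_cast
  field_simp
  ring

def extendByZero {T : ℕ} (x : Fin T → ℝ) (j : ℕ) : ℝ := if h : j < T then x ⟨j, h⟩ else 0

lemma extendByZero_of_lt {T : ℕ} (x : Fin T → ℝ) {j : ℕ} (h : j < T) :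
    extendByZero x j = x ⟨j, h⟩ := dif_pos h

lemma monotone_extendByZero {T : ℕ} : Monotone (extendByZero (T := T)) := by
  intro x y hxy j
  unfold extendByZero
  split_ifs
  exacts [hxy _, le_rfl]

lemma extendByZero_update_of_ne {T : ℕ} (x : Fin T → ℝ) (i : Fin T) (t : ℝ) {j : ℕ}
    (hj : j ≠ i) : extendByZero (update x i t) j = extendByZero x j := by
  unfold extendByZero
  split_ifs
  · exact update_of_ne (fun h => hj (by rw [← h])) _ _
  · rfl

section PathSpace

variable {N : ℕ} {ν : Measure ℝ} [IsProbabilityMeasure ν]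

lemma integrable_extendByZero (hν : Integrable (fun t : ℝ => t) ν) (j : ℕ) :
    Integrable (fun x : Fin (N + 1) → ℝ => extendByZero x j) (Measure.pi fun _ => ν) := by
  unfold extendByZero
  split_ifs
  exacts [integrable_comp_eval (μ := fun _ => ν) hν, integrable_const 0]

lemma integrable_sampleMean_extendByZero (hν : Integrable (fun t : ℝ => t) ν) (k : ℕ) :
    Integrable (fun x : Fin (N + 1) → ℝ => sampleMean (extendByZero x) k)
      (Measure.pi fun _ => ν) :=
  (integrable_finsetSum _ fun j _ => integrable_extendByZero hν j).div_const _

lemma IsUpperSet.setIntegral_sampleMean_succ_sub_nonpos (hν : Integrable (fun t : ℝ => t) ν)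
    {U : Set (Fin (N + 1) → ℝ)} (hU : IsUpperSet U) {k : ℕ} (hk : k ≠ 0) (hkN : k < N + 1)
    (hUk : ∀ x t, update x ⟨k, hkN⟩ t ∈ U ↔ x ∈ U) :
    ∫ x in U, (sampleMean (extendByZero x) (k + 1) - sampleMean (extendByZero x) k)
      ∂(Measure.pi fun _ => ν) ≤ 0 := by
  have hint : ∀ i : Fin (N + 1),
      IntegrableOn (fun x => x i - ∫ u, u ∂ν) U (Measure.pi fun _ => ν) := fun i =>
    ((integrable_comp_eval (μ := fun _ => ν) hν).sub (integrable_const _)).integrableOn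
  have hcoord : ∀ j ∈ Finset.range k,
      ∫ x in U, (extendByZero x k - extendByZero x j) ∂(Measure.pi fun _ => ν) ≤ 0 := by
    intro j hj
    have hjN : j < N + 1 := (Finset.mem_range.1 hj).trans hkN
    have hsplit := integral_sub (hint ⟨k, hkN⟩) (hint ⟨j, hjN⟩)
    simp only [sub_sub_sub_cancel_right] at hsplit
    simp only [extendByZero_of_lt _ hkN, extendByZero_of_lt _ hjN, hsplit,
      setIntegral_eval_sub_integral_id_eq_zero hν _ hUk, zero_sub, neg_nonpos]
    exact hU.setIntegral_eval_sub_integral_id_nonneg hν _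
  calc ∫ x in U, (sampleMean (extendByZero x) (k + 1) - sampleMean (extendByZero x) k)
        ∂(Measure.pi fun _ => ν)
      = ∫ x in U, (∑ j ∈ Finset.range k, (extendByZero x k - extendByZero x j)) / (k * (k + 1))
          ∂(Measure.pi fun _ => ν) := by
        simp only [sampleMean_succ_sub _ hk]
    _ = (∑ j ∈ Finset.range k, ∫ x in U, (extendByZero x k - extendByZero x j)
          ∂(Measure.pi fun _ => ν)) / (k * (k + 1)) := by
        rw [integral_div, integral_finsetSum _ fun j _ => ?_]
        exact ((integrable_extendByZero hν k).sub (integrable_extendByZero hν j)).integrableOn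
    _ ≤ 0 := div_nonpos_of_nonpos_of_nonneg (Finset.sum_nonpos hcoord) (by positivity)

variable {m : (Fin (N + 1) → ℝ) → ℕ}

lemma sampleMean_extendByZero_eq_sum_indicator (hmT : ∀ x, m x ≤ N + 1)
    (x : Fin (N + 1) → ℝ) :
    sampleMean (extendByZero x) (m x) = ∑ k ∈ Finset.range (N + 1), {y | k < m y}.indicator
      (fun y => sampleMean (extendByZero y) (k + 1) - sampleMean (extendByZero y) k) x := by
  simp [sampleMean_eq_sum_ite _ (hmT x), Set.indicator_apply]

lemma integrable_sampleMean_stopped (hν : Integrable (fun t : ℝ => t) ν)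
    (hmT : ∀ x, m x ≤ N + 1) (hmono : Monotone m) :
    Integrable (fun x => sampleMean (extendByZero x) (m x)) (Measure.pi fun _ => ν) := by
  simp_rw [sampleMean_extendByZero_eq_sum_indicator hmT]
  exact integrable_finsetSum _ fun k _ =>
    ((integrable_sampleMean_extendByZero hν _).sub
      (integrable_sampleMean_extendByZero hν _)).indicator₀
      (IsUpperSet.nullMeasurableSet_pi ν fun x y hxy hx => hx.trans_le (hmono hxy))

theorem integral_sampleMean_stopped_le (hν : Integrable (fun t : ℝ => t) ν)
    (hm1 : ∀ x, 1 ≤ m x) (hmT : ∀ x, m x ≤ N + 1) (hmono : Monotone m)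
    (hstop : ∀ (k : Fin (N + 1)) x t, k.val < m (update x k t) ↔ k.val < m x) :
    ∫ x, sampleMean (extendByZero x) (m x) ∂(Measure.pi fun _ => ν) ≤ ∫ t, t ∂ν := by
  have hU : ∀ k : ℕ, IsUpperSet {y | k < m y} := fun k x y hxy hx => hx.trans_le (hmono hxy)
  have hfirst : ∫ x in {y | 0 < m y},
      (sampleMean (extendByZero x) 1 - sampleMean (extendByZero x) 0)
      ∂(Measure.pi fun _ => ν) = ∫ t, t ∂ν := by
    rw [show {y | 0 < m y} = univ from eq_univ_of_forall hm1, Measure.restrict_univ]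
    simp [sampleMean, extendByZero_of_lt _ N.succ_pos, integral_eval]
  simp_rw [sampleMean_extendByZero_eq_sum_indicator hmT]
  rw [integral_finsetSum _ fun k _ => ?_]
  · simp only [integral_indicator₀ ((hU _).nullMeasurableSet_pi ν)]
    rw [Finset.range_eq_Ico, Finset.sum_eq_sum_Ico_succ_bot N.succ_pos, hfirst]
    refine add_le_of_nonpos_right (Finset.sum_nonpos fun k hk => ?_)
    obtain ⟨hk0, hkN⟩ := Finset.mem_Ico.1 hk
    exact (hU k).setIntegral_sampleMean_succ_sub_nonpos hν (by omega) hkN (hstop ⟨k, hkN⟩)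
  · exact ((integrable_sampleMean_extendByZero hν _).sub
      (integrable_sampleMean_extendByZero hν _)).indicator₀ ((hU k).nullMeasurableSet_pi ν)

end PathSpace

lemma ProbabilityTheory.iIndepFun.map_fin_eq_pi {Ω β : Type*} [MeasurableSpace Ω]
    [MeasurableSpace β] {P : Measure Ω} {X : ℕ → Ω → β} (hX : ∀ i, Measurable (X i))
    (hindep : iIndepFun X P) (hident : ∀ i, P.map (X i) = P.map (X 0)) (T : ℕ) :
    P.map (fun ω (i : Fin T) => X i ω) = Measure.pi fun _ => P.map (X 0) := by
  rw [(hindep.precomp Fin.val_injective).map_fun_eq_pi_map fun i => (hX _).aemeasurable]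
  simp only [hident]

lemma sampleMean_extendByZero_stopped {N : ℕ} {n : (ℕ → ℝ) → ℕ}
    (hdep : DependsOn n (Finset.range (N + 1) : Set ℕ)) (hnT : ∀ f, n f ≤ N + 1) (f : ℕ → ℝ) :
    sampleMean (extendByZero fun i : Fin (N + 1) => f i)
      (n (extendByZero fun i : Fin (N + 1) => f i)) = sampleMean f (n f) := by
  rw [hdep fun j hj => extendByZero_of_lt _ (Finset.mem_range.1 hj), sampleMean, sampleMean]
  exact congrArg (· / _) (Finset.sum_congr rfl fun j hj =>
    extendByZero_of_lt _ ((Finset.mem_range.1 hj).trans_le (hnT _)))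

/-- Negative bias under Exploit for a single arm against a fixed environment.
The i.i.d. values `σ 0, σ 1, …` of arm 1 have mean `μ`. The deterministic mapping
`n` gives the number of samples of arm 1 collected by horizon `T` as a function of
the sample path; it satisfies `1 ≤ n ≤ T`, the stopping structure (whether at least
`i+1` samples are collected depends only on the first `i` values), and the Exploit
property (raising one value of the path, keeping all other values fixed, never
decreases the number of collected samples). Then the expected sample mean of the
collected values is at most `μ`. -/
theorem exploit_negative_bias {Ω : Type*} [MeasureSpace Ω]
    [IsProbabilityMeasure (ℙ : Measure Ω)]
    (T : ℕ) (hT : 1 ≤ T) (μ : ℝ)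
    (σ : ℕ → Ω → ℝ) (hmeas : ∀ i, Measurable (σ i))
    (hindep : iIndepFun σ ℙ)
    (hident : ∀ i, Measure.map (σ i) ℙ = Measure.map (σ 0) ℙ)
    (hint : Integrable (σ 0) ℙ) (hmean : ∫ ω, σ 0 ω ∂ℙ = μ)
    (n : (ℕ → ℝ) → ℕ)
    (hn1 : ∀ f, 1 ≤ n f) (hnT : ∀ f, n f ≤ T)
    (hstop : ∀ f g : ℕ → ℝ, ∀ i : ℕ, (∀ j < i, f j = g j) →
      (i + 1 ≤ n f ↔ i + 1 ≤ n g))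
    (hexploit : ∀ f g : ℕ → ℝ, ∀ l : ℕ, (∀ j ≠ l, f j = g j) → f l ≤ g l →
      n f ≤ n g) :
    ∫ ω, (∑ i ∈ Finset.range (n fun i => σ i ω), σ i ω) / (n fun i => σ i ω) ∂ℙ
      ≤ μ := by
  obtain ⟨N, rfl⟩ : ∃ N, T = N + 1 := ⟨T - 1, by omega⟩
  set ν : Measure ℝ := Measure.map (σ 0) ℙ
  have hν : Integrable (fun t : ℝ => t) ν :=
    (integrable_map_measure aestronglyMeasurable_id (hmeas 0).aemeasurable).2 hint
  have hνμ : ∫ t, t ∂ν = μ :=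
    (integral_map (hmeas 0).aemeasurable aestronglyMeasurable_id).trans hmean
  have : IsProbabilityMeasure ν := Measure.isProbabilityMeasure_map (hmeas 0).aemeasurable
  set Φ : Ω → Fin (N + 1) → ℝ := fun ω i => σ i ω
  have hΦ : Measure.map Φ ℙ = Measure.pi fun _ => ν := hindep.map_fin_eq_pi hmeas hident _
  have hdep := dependsOn_range_of_stopping hn1 hnT hstop
  have hmono : Monotone n := hdep.monotone fun f l t t' htt' =>
    hexploit _ _ l (fun j hj => by simp [update_of_ne hj]) (by simpa using htt')
  set m : (Fin (N + 1) → ℝ) → ℕ := fun x => n (extendByZero x)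
  have hm_mono : Monotone m := hmono.comp monotone_extendByZero
  have hm_stop : ∀ (k : Fin (N + 1)) x t, k.val < m (update x k t) ↔ k.val < m x :=
    fun k x t => hstop _ _ k fun j hj => extendByZero_update_of_ne x k t hj.ne
  have hG := integrable_sampleMean_stopped hν (fun x => hnT _) hm_mono
  rw [← hΦ] at hG
  calc _ = ∫ ω, sampleMean (extendByZero (Φ ω)) (m (Φ ω)) ∂ℙ :=
        integral_congr_ae <| ae_of_all _ fun ω =>
          (sampleMean_extendByZero_stopped hdep hnT fun i => σ i ω).symm
    _ = ∫ x, sampleMean (extendByZero x) (m x) ∂(Measure.pi fun _ => ν) := by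
      rw [← hΦ, integral_map (measurable_pi_lambda Φ fun i => hmeas i).aemeasurable
        hG.aestronglyMeasurable]
    _ ≤ μ := hνμ ▸ integral_sampleMean_stopped_le hν (fun x => hn1 _) (fun x => hnT _)
      hm_mono hm_stop
end

section
/- Two-arm, T=3 greedy with general integrable arms: Let X, X' be i.i.d. with mean μ1 and let Y be independent of (X, X') with mean μ2, where at round 3 a second sample is drawn from arm 1 exactly when X ≥ Y (ties go to arm 1), so that the sample mean of arm 1 is X·1{X<Y} + ((X+X')/2)·1{X≥Y}. Then E[sample mean of arm 1] = μ1 + (1/2)·E[(X−μ1)·1{X<Y}], and E[(X−μ1)·1{X<Y}] ≤ 0 because x ↦ 1{x<Y} is (pathwise) nonincreasing in x and, by the FKG/Chebyshev correlation inequality, E[(X−μ1)·g(X)] ≤ 0 for any nonincreasing function g; hence E[sample mean of arm 1] − μ1 ≤ 0. -/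
open MeasureTheory ProbabilityTheory

/-- Two-arm, `T = 3` greedy with general integrable arms: `X, X'` are i.i.d. with mean
`μ1`, and `Y` (the sample of arm 2) is independent of `(X, X')` with mean `μ2`. A
second sample of arm 1 is drawn exactly when `X ≥ Y` (ties to arm 1), so the sample
mean of arm 1 is `X` when `X < Y` and `(X + X')/2` when `X ≥ Y`. Then
`E[sample mean of arm 1] = μ1 + (1/2) E[(X - μ1) 1{X < Y}] ≤ μ1`. -/
theorem two_arm_greedy_negative_bias {Ω : Type*} [MeasureSpace Ω]
    [IsProbabilityMeasure (ℙ : Measure Ω)]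
    (X X' Y : Ω → ℝ) (μ1 μ2 : ℝ)
    (hmX : Measurable X) (hmX' : Measurable X') (hmY : Measurable Y)
    (hindep : iIndepFun ![X, X', Y] ℙ)
    (hident : Measure.map X' ℙ = Measure.map X ℙ)
    (hintX : Integrable X ℙ) (hintY : Integrable Y ℙ)
    (hmeanX : ∫ ω, X ω ∂ℙ = μ1) (hmeanY : ∫ ω, Y ω ∂ℙ = μ2) :
    (∫ ω, (if X ω < Y ω then X ω else (X ω + X' ω) / 2) ∂ℙ)
        = μ1 + (1 / 2) * ∫ ω, (if X ω < Y ω then X ω - μ1 else 0) ∂ℙ ∧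
      (∫ ω, (if X ω < Y ω then X ω else (X ω + X' ω) / 2) ∂ℙ) ≤ μ1 := by
  have hm : ∀ i, Measurable (![X, X', Y] i) := by
    intro i; fin_cases i <;> simpa using ‹_›
  -- Integrability and mean of X'
  have hintX' : Integrable X' ℙ := by
    have h1 : Integrable id (Measure.map X ℙ) :=
      (integrable_map_measure aestronglyMeasurable_id hmX.aemeasurable).mpr hintX
    have h2 : Integrable id (Measure.map X' ℙ) := by rw [hident]; exact h1
    simpa using (integrable_map_measure aestronglyMeasurable_id hmX'.aemeasurable).mp h2
  have hmeanX' : ∫ ω, X' ω ∂ℙ = μ1 := by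
    have : ∫ ω, X' ω ∂ℙ = ∫ x, id x ∂(Measure.map X' ℙ) :=
      (integral_map hmX'.aemeasurable aestronglyMeasurable_id).symm
    rw [this, hident, integral_map hmX.aemeasurable aestronglyMeasurable_id]
    simpa using hmeanX
  -- indicators
  set I : Ω → ℝ := fun ω => if X ω < Y ω then (1 : ℝ) else 0 with hIdef
  set J : Ω → ℝ := fun ω => if X' ω < Y ω then (1 : ℝ) else 0 with hJdef
  have hmI : Measurable I :=
    Measurable.ite (measurableSet_lt hmX hmY) measurable_const measurable_const
  have hmJ : Measurable J :=
    Measurable.ite (measurableSet_lt hmX' hmY) measurable_const measurable_const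
  have hIbdd : ∃ C, ∀ ω, ‖I ω‖ ≤ C := ⟨1, fun ω => by
    simp only [hIdef]; split <;> simp⟩
  have hJbdd : ∃ C, ∀ ω, ‖J ω‖ ≤ C := ⟨1, fun ω => by
    simp only [hJdef]; split <;> simp⟩
  have intIX : Integrable (fun ω => I ω * X ω) ℙ :=
    hintX.bdd_mul hmI.aestronglyMeasurable (ae_of_all _ hIbdd.choose_spec)
  have intIX' : Integrable (fun ω => I ω * X' ω) ℙ :=
    hintX'.bdd_mul hmI.aestronglyMeasurable (ae_of_all _ hIbdd.choose_spec)
  have intJX : Integrable (fun ω => J ω * X ω) ℙ :=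
    hintX.bdd_mul hmJ.aestronglyMeasurable (ae_of_all _ hJbdd.choose_spec)
  have intJX' : Integrable (fun ω => J ω * X' ω) ℙ :=
    hintX'.bdd_mul hmJ.aestronglyMeasurable (ae_of_all _ hJbdd.choose_spec)
  have intI : Integrable I ℙ := by
    have := (integrable_const (1 : ℝ) (μ := (ℙ : Measure Ω))).bdd_mul
      hmI.aestronglyMeasurable (ae_of_all _ hIbdd.choose_spec)
    simpa using this
  -- independence : I is independent of X'
  have hXY_X' : IndepFun (fun ω => (X ω, Y ω)) X' ℙ := by
    have := hindep.indepFun_prodMk hm 0 2 1 (by decide) (by decide)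
    simpa using this
  have hI_X' : IndepFun I X' ℙ := by
    have hφ : Measurable (fun p : ℝ × ℝ => if p.1 < p.2 then (1 : ℝ) else 0) :=
      Measurable.ite (measurableSet_lt measurable_fst measurable_snd)
        measurable_const measurable_const
    exact hXY_X'.comp hφ measurable_id
  have hIX'_int : ∫ ω, I ω * X' ω ∂ℙ = (∫ ω, I ω ∂ℙ) * μ1 := by
    have := hI_X'.integral_fun_mul_eq_mul_integral intI.aestronglyMeasurable hintX'.aestronglyMeasurable
    simpa [hmeanX', Pi.mul_apply] using this
  -- key: ∫ I (X - μ1) = ∫ I X - μ1 ∫ I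
  have hkey : ∫ ω, (if X ω < Y ω then X ω - μ1 else 0) ∂ℙ
      = (∫ ω, I ω * X ω ∂ℙ) - (∫ ω, I ω * X' ω ∂ℙ) := by
    have h1 : (fun ω => (if X ω < Y ω then X ω - μ1 else 0))
        = fun ω => I ω * X ω - μ1 * I ω := by
      funext ω; simp only [hIdef]; split <;> ring
    rw [h1, integral_sub intIX (intI.const_mul μ1), integral_const_mul, hIX'_int]
    ring
  -- Part 1: the equality
  have heq : (∫ ω, (if X ω < Y ω then X ω else (X ω + X' ω) / 2) ∂ℙ)
      = μ1 + (1 / 2) * ∫ ω, (if X ω < Y ω then X ω - μ1 else 0) ∂ℙ := by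
    have hdecomp : (fun ω => (if X ω < Y ω then X ω else (X ω + X' ω) / 2))
        = fun ω => (X ω + X' ω) / 2 + (1 / 2) * (I ω * X ω - I ω * X' ω) := by
      funext ω; simp only [hIdef]; split <;> ring
    have intd : Integrable (fun ω => I ω * X ω - I ω * X' ω) ℙ := intIX.sub intIX'
    have intd2 : Integrable (fun ω => (1/2 : ℝ) * (I ω * X ω - I ω * X' ω)) ℙ :=
      intd.const_mul _
    have intsum : Integrable (fun ω => (X ω + X' ω) / 2) ℙ := (hintX.add hintX').div_const 2
    rw [hdecomp, integral_add intsum intd2, integral_const_mul, integral_sub intIX intIX', hkey]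
    have : ∫ ω, (X ω + X' ω) / 2 ∂ℙ = μ1 := by
      rw [integral_div, integral_add hintX hintX', hmeanX, hmeanX']; ring
    rw [this]
  refine ⟨heq, ?_⟩
  -- Part 2: the inequality.  It suffices that ∫ I X ≤ ∫ I X'.
  rw [heq]
  have hsuff : (∫ ω, I ω * X ω ∂ℙ) ≤ ∫ ω, I ω * X' ω ∂ℙ := by
    -- joint laws of (X, X', Y) and (X', X, Y) agree
    have hX'Y : IndepFun X' Y ℙ := by
      have := hindep.indepFun (i := 1) (j := 2) (by decide); simpa using this
    have hXY : IndepFun X Y ℙ := by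
      have := hindep.indepFun (i := 0) (j := 2) (by decide); simpa using this
    have hX_pair : IndepFun X (fun ω => (X' ω, Y ω)) ℙ := by
      have := (hindep.indepFun_prodMk hm 1 2 0 (by decide) (by decide)).symm
      simpa using this
    have hX'_pair : IndepFun X' (fun ω => (X ω, Y ω)) ℙ := hXY_X'.symm
    have hmap1 : Measure.map (fun ω => (X ω, X' ω, Y ω)) ℙ
        = (Measure.map X ℙ).prod ((Measure.map X' ℙ).prod (Measure.map Y ℙ)) := by
      rw [← (indepFun_iff_map_prod_eq_prod_map_map hmX'.aemeasurable
        hmY.aemeasurable).mp hX'Y]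
      exact (indepFun_iff_map_prod_eq_prod_map_map hmX.aemeasurable
        (hmX'.prodMk hmY).aemeasurable).mp hX_pair
    have hmap2 : Measure.map (fun ω => (X' ω, X ω, Y ω)) ℙ
        = (Measure.map X' ℙ).prod ((Measure.map X ℙ).prod (Measure.map Y ℙ)) := by
      rw [← (indepFun_iff_map_prod_eq_prod_map_map hmX.aemeasurable
        hmY.aemeasurable).mp hXY]
      exact (indepFun_iff_map_prod_eq_prod_map_map hmX'.aemeasurable
        (hmX.prodMk hmY).aemeasurable).mp hX'_pair
    have hmapeq : Measure.map (fun ω => (X ω, X' ω, Y ω)) ℙ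
        = Measure.map (fun ω => (X' ω, X ω, Y ω)) ℙ := by
      rw [hmap1, hmap2, hident]
    have hswap : ∀ G : ℝ × ℝ × ℝ → ℝ, Measurable G →
        ∫ ω, G (X ω, X' ω, Y ω) ∂ℙ = ∫ ω, G (X' ω, X ω, Y ω) ∂ℙ := by
      intro G hG
      rw [← integral_map (hmX.prodMk (hmX'.prodMk hmY)).aemeasurable
          hG.aestronglyMeasurable,
        ← integral_map (hmX'.prodMk (hmX.prodMk hmY)).aemeasurable
          hG.aestronglyMeasurable, hmapeq]
    have hmlt : MeasurableSet {p : ℝ × ℝ × ℝ | p.2.1 < p.2.2} :=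
      measurableSet_lt (measurable_fst.comp measurable_snd)
        (measurable_snd.comp measurable_snd)
    -- swap identities
    have hG1 : ∫ ω, J ω * X ω ∂ℙ = ∫ ω, I ω * X' ω ∂ℙ := by
      have := hswap (fun p => (if p.2.1 < p.2.2 then (1 : ℝ) else 0) * p.1)
        ((Measurable.ite hmlt measurable_const measurable_const).mul measurable_fst)
      simpa [hIdef, hJdef] using this
    have hG2 : ∫ ω, J ω * X' ω ∂ℙ = ∫ ω, I ω * X ω ∂ℙ := by
      have := hswap (fun p => (if p.2.1 < p.2.2 then (1 : ℝ) else 0) * p.2.1)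
        ((Measurable.ite hmlt measurable_const measurable_const).mul
          (measurable_fst.comp measurable_snd))
      simpa [hIdef, hJdef] using this
    -- pointwise: (X - X') * (I - J) ≤ 0
    have hpt : ∀ ω, (X ω - X' ω) * (I ω - J ω) ≤ 0 := by
      intro ω
      simp only [hIdef, hJdef]
      rcases lt_or_ge (X ω) (Y ω) with h1 | h1 <;>
        rcases lt_or_ge (X' ω) (Y ω) with h2 | h2 <;>
        simp [h1, h2, not_lt.mpr, h1.not_gt] <;> nlinarith
    have hint0 : ∫ ω, (X ω - X' ω) * (I ω - J ω) ∂ℙ ≤ 0 :=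
      integral_nonpos hpt
    have hexp : ∫ ω, (X ω - X' ω) * (I ω - J ω) ∂ℙ
        = 2 * ((∫ ω, I ω * X ω ∂ℙ) - ∫ ω, I ω * X' ω ∂ℙ) := by
      have h1 : (fun ω => (X ω - X' ω) * (I ω - J ω))
          = fun ω => (I ω * X ω - I ω * X' ω) - (J ω * X ω - J ω * X' ω) := by
        funext ω; ring
      have d1 : Integrable (fun ω => I ω * X ω - I ω * X' ω) ℙ := intIX.sub intIX'
      have d2 : Integrable (fun ω => J ω * X ω - J ω * X' ω) ℙ := intJX.sub intJX'
      rw [h1, integral_sub d1 d2,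
        integral_sub intIX intIX', integral_sub intJX intJX', hG1, hG2]
      ring
    linarith [hexp ▸ hint0]
  rw [hkey]
  nlinarith [hsuff]
end
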